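/- Let X ⊂ ℝⁿ be a finite set, let r > 0, and for x ∈ X let N(x) denote its one-hop neighborhood in the r-neighborhood graph G_r(X). Let 0 < ε < 1 satisfy, for every x ∈ X, ε < min{ (r² − max_{y∈N(x)} ‖x−y‖²) / max_{y∈N(x)} ‖x−y‖², (min_{y∉N(x)} ‖x−y‖² − r²) / min_{y∉N(x)} ‖x−y‖² }. Let A ∈ ℝ^{m×n} be any (deterministic) matrix satisfying (1−ε)‖x−y‖² ≤ ‖Ax − Ay‖² ≤ (1+ε)‖x−y‖² for all x, y ∈ X. Then the map ψ: x ↦ Ax is a graph isomorphism between G_r(X) and G_r(AX), where AX = {Ax : x ∈ X}. -/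

import Mathlib

/-!
Let `M` be the largest squared distance from `x` to a neighbour and `μ` the smallest squared
distance to a non-neighbour. The gap condition says exactly `(1 + ε) M < r²` and
`r² < (1 - ε) μ`, so after a distortion of squared distances by a factor in `[1 - ε, 1 + ε]`
every neighbour of `x` stays strictly inside the ball of radius `r` around the image of `x`
and every non-neighbour strictly outside it; the lower bound with `ε < 1` also gives
injectivity.
-/

open MeasureTheory ProbabilityTheory

/-- The Euclidean (`L²`) norm of a vector in `ℝ^k`. -/
noncomputable def euclNorm {k : ℕ} (x : Fin k → ℝ) : ℝ := Real.sqrt (∑ i, x i ^ 2)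

/-- The Euclidean distance between two vectors in `ℝ^k`. -/
noncomputable def distE {k : ℕ} (a b : Fin k → ℝ) : ℝ := euclNorm (a - b)

/-- Matrix-vector multiplication, viewing a matrix as a function of its rows. -/
def matVec {m n : ℕ} (A : Fin m → Fin n → ℝ) (x : Fin n → ℝ) : Fin m → ℝ :=
  fun i => ∑ j, A i j * x j

/-- The law of a random `m × n` matrix with i.i.d. centered Gaussian entries of variance `v`. -/
noncomputable def gaussMat (m n : ℕ) (v : NNReal) : Measure (Fin m → Fin n → ℝ) :=
  Measure.pi fun _ : Fin m => Measure.pi fun _ : Fin n => gaussianReal 0 v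

/-- Adjacency in the `r`-neighborhood graph `G_r(X)` (w.r.t. the distance `d`):
distinct points of `X` at distance `< r`. -/
def RAdj {V : Type*} (d : V → V → ℝ) (X : Finset V) (r : ℝ) (x y : V) : Prop :=
  x ≠ y ∧ x ∈ X ∧ y ∈ X ∧ d x y < r

/-- `max_{y ∈ N(x)} g x y`, where `N(x)` is the one-hop neighborhood of `x` in `G_r(X)`. -/
noncomputable def maxNbrVal {V : Type*} (d : V → V → ℝ) (X : Finset V) (r : ℝ)
    (g : V → V → ℝ) (x : V) : ℝ :=
  sSup {s : ℝ | ∃ y, RAdj d X r x y ∧ s = g x y}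

/-- `min_{y ∈ X, y ∉ N(x), y ≠ x} g x y`, where `N(x)` is the one-hop neighborhood of `x`
in `G_r(X)`. -/
noncomputable def minNonNbrVal {V : Type*} (d : V → V → ℝ) (X : Finset V) (r : ℝ)
    (g : V → V → ℝ) (x : V) : ℝ :=
  sInf {s : ℝ | ∃ y ∈ X, y ≠ x ∧ ¬ RAdj d X r x y ∧ s = g x y}

/-- `ψ` is a graph isomorphism between `G_r(X)` and `G_r(ψ(X))`: it is a bijection of `X`
onto its image preserving and reflecting `r`-neighborhood adjacency. -/
def IsRIso {V W : Type*} [DecidableEq W] (dV : V → V → ℝ) (dW : W → W → ℝ)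
    (X : Finset V) (r : ℝ) (ψ : V → W) : Prop :=
  Set.InjOn ψ X ∧
    ∀ x ∈ X, ∀ y ∈ X, (RAdj dV X r x y ↔ RAdj dW (X.image ψ) r (ψ x) (ψ y))

lemma distE_nonneg {k : ℕ} (a b : Fin k → ℝ) : 0 ≤ distE a b := Real.sqrt_nonneg _

lemma distE_self {k : ℕ} (a : Fin k → ℝ) : distE a a = 0 := by
  simp [distE, euclNorm]

lemma distE_pos {k : ℕ} {a b : Fin k → ℝ} (h : a ≠ b) : 0 < distE a b := by
  obtain ⟨i, hi⟩ := Function.ne_iff.mp h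
  refine Real.sqrt_pos.mpr (lt_of_lt_of_le ?_ (Finset.single_le_sum
    (f := fun j => (a - b) j ^ 2) (fun j _ => sq_nonneg _) (Finset.mem_univ i)))
  exact sq_pos_of_ne_zero (sub_ne_zero.mpr hi)

section NeighborhoodGraph

variable {V : Type*} {d : V → V → ℝ} {X : Finset V} {r : ℝ} {x y : V}

lemma le_maxNbrVal (g : V → V → ℝ) (h : RAdj d X r x y) : g x y ≤ maxNbrVal d X r g x :=
  le_csSup ((X.image (g x)).bddAbove.mono (by
    rintro _ ⟨z, ⟨-, -, hz, -⟩, rfl⟩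
    exact Finset.mem_coe.mpr (Finset.mem_image_of_mem _ hz))) ⟨y, h, rfl⟩

lemma minNonNbrVal_le (g : V → V → ℝ) (hy : y ∈ X) (hyx : y ≠ x) (h : ¬ RAdj d X r x y) :
    minNonNbrVal d X r g x ≤ g x y :=
  csInf_le ((X.image (g x)).bddBelow.mono (by
    rintro _ ⟨z, hz, -, -, rfl⟩
    exact Finset.mem_coe.mpr (Finset.mem_image_of_mem _ hz))) ⟨y, hy, hyx, h, rfl⟩

lemma le_dist_of_not_rAdj (hx : x ∈ X) (hy : y ∈ X) (hyx : y ≠ x) (h : ¬ RAdj d X r x y) :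
    r ≤ d x y :=
  not_lt.mp fun hlt => h ⟨hyx.symm, hx, hy, hlt⟩

lemma sq_le_minNonNbrVal (hr : 0 ≤ r) (hx : x ∈ X) (hy : y ∈ X) (hyx : y ≠ x)
    (h : ¬ RAdj d X r x y) : r ^ 2 ≤ minNonNbrVal d X r (fun a b => d a b ^ 2) x :=
  le_csInf ⟨_, y, hy, hyx, h, rfl⟩ <| by
    rintro _ ⟨z, hz, hzx, hnz, rfl⟩
    exact pow_le_pow_left₀ hr (le_dist_of_not_rAdj hx hz hzx hnz) 2

end NeighborhoodGraph

lemma one_add_mul_lt_of_lt_sub_div {ε M c : ℝ} (hM : 0 < M) (h : ε < (c - M) / M) :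
    (1 + ε) * M < c := by
  rw [lt_div_iff₀ hM] at h
  linarith

lemma lt_one_sub_mul_of_lt_sub_div {ε μ c : ℝ} (hμ : 0 < μ) (h : ε < (μ - c) / μ) :
    c < (1 - ε) * μ := by
  rw [lt_div_iff₀ hμ] at h
  linarith

section Distortion

variable {V W : Type*} {dV : V → V → ℝ} {dW : W → W → ℝ} {X : Finset V} {r ε : ℝ}
  {ψ : V → W} {x y : V}

lemma injOn_of_sq_dist_le (hdV : ∀ a b, a ≠ b → 0 < dV a b) (hdW : ∀ a, dW a a = 0)
    (hε1 : ε < 1) (hψ : ∀ x ∈ X, ∀ y ∈ X, (1 - ε) * dV x y ^ 2 ≤ dW (ψ x) (ψ y) ^ 2) :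
    Set.InjOn ψ X := by
  intro x hx y hy hxy
  by_contra hne
  have hpos : 0 < (1 - ε) * dV x y ^ 2 := mul_pos (by linarith) (pow_pos (hdV x y hne) 2)
  have := hψ x hx y hy
  rw [hxy, hdW, zero_pow two_ne_zero] at this
  linarith

lemma dist_lt_of_rAdj (hdV : ∀ a b, a ≠ b → 0 < dV a b) (hr : 0 ≤ r) (hε0 : 0 ≤ ε)
    (hgap : ε < (r ^ 2 - maxNbrVal dV X r (fun a b => dV a b ^ 2) x) /
      maxNbrVal dV X r (fun a b => dV a b ^ 2) x)
    (hψ : dW (ψ x) (ψ y) ^ 2 ≤ (1 + ε) * dV x y ^ 2) (h : RAdj dV X r x y) :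
    dW (ψ x) (ψ y) < r := by
  set M := maxNbrVal dV X r (fun a b => dV a b ^ 2) x
  have hM : dV x y ^ 2 ≤ M := le_maxNbrVal (fun a b => dV a b ^ 2) h
  have hMpos : 0 < M := (pow_pos (hdV x y h.1) 2).trans_le hM
  refine lt_of_pow_lt_pow_left₀ 2 hr ?_
  calc dW (ψ x) (ψ y) ^ 2 ≤ (1 + ε) * dV x y ^ 2 := hψ
    _ ≤ (1 + ε) * M := by gcongr
    _ < r ^ 2 := one_add_mul_lt_of_lt_sub_div hMpos hgap

lemma lt_dist_of_not_rAdj (hdW : ∀ a b, 0 ≤ dW a b) (hr : 0 < r) (hε1 : ε ≤ 1)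
    (hgap : ε < (minNonNbrVal dV X r (fun a b => dV a b ^ 2) x - r ^ 2) /
      minNonNbrVal dV X r (fun a b => dV a b ^ 2) x)
    (hψ : (1 - ε) * dV x y ^ 2 ≤ dW (ψ x) (ψ y) ^ 2)
    (hx : x ∈ X) (hy : y ∈ X) (hyx : y ≠ x) (h : ¬ RAdj dV X r x y) :
    r < dW (ψ x) (ψ y) := by
  set μ := minNonNbrVal dV X r (fun a b => dV a b ^ 2) x
  have hμ : r ^ 2 ≤ μ := sq_le_minNonNbrVal hr.le hx hy hyx h
  refine lt_of_pow_lt_pow_left₀ 2 (hdW _ _) ?_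
  calc r ^ 2 < (1 - ε) * μ := lt_one_sub_mul_of_lt_sub_div ((pow_pos hr 2).trans_le hμ) hgap
    _ ≤ (1 - ε) * dV x y ^ 2 := by
      gcongr
      exact minNonNbrVal_le _ hy hyx h
    _ ≤ dW (ψ x) (ψ y) ^ 2 := hψ

theorem isRIso_of_sq_dist_bounds [DecidableEq W] (hdV : ∀ a b, a ≠ b → 0 < dV a b)
    (hdW_self : ∀ a, dW a a = 0) (hdW_nonneg : ∀ a b, 0 ≤ dW a b) (hr : 0 < r)
    (hε0 : 0 ≤ ε) (hε1 : ε < 1)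
    (hgap : ∀ x ∈ X,
      ε < min
        ((r ^ 2 - maxNbrVal dV X r (fun a b => dV a b ^ 2) x) /
          maxNbrVal dV X r (fun a b => dV a b ^ 2) x)
        ((minNonNbrVal dV X r (fun a b => dV a b ^ 2) x - r ^ 2) /
          minNonNbrVal dV X r (fun a b => dV a b ^ 2) x))
    (hψ : ∀ x ∈ X, ∀ y ∈ X,
      (1 - ε) * dV x y ^ 2 ≤ dW (ψ x) (ψ y) ^ 2 ∧ dW (ψ x) (ψ y) ^ 2 ≤ (1 + ε) * dV x y ^ 2) :
    IsRIso dV dW X r ψ := by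
  have hinj : Set.InjOn ψ X :=
    injOn_of_sq_dist_le hdV hdW_self hε1 fun x hx y hy => (hψ x hx y hy).1
  refine ⟨hinj, fun x hx y hy => ⟨fun h => ?_, ?_⟩⟩
  · exact ⟨fun he => h.1 (hinj hx hy he), Finset.mem_image_of_mem _ hx,
      Finset.mem_image_of_mem _ hy,
      dist_lt_of_rAdj hdV hr.le hε0 ((hgap x hx).trans_le (min_le_left _ _)) (hψ x hx y hy).2 h⟩
  · rintro ⟨hne, -, -, hlt⟩
    have hyx : y ≠ x := by rintro rfl; exact hne rfl
    by_contra h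
    exact lt_asymm hlt <| lt_dist_of_not_rAdj hdW_nonneg hr hε1.le
      ((hgap x hx).trans_le (min_le_right _ _)) (hψ x hx y hy).1 hx hy hyx h

end Distortion

/-- a deterministic linear map with squared-distance distortion bounds induces a
graph isomorphism of `r`-neighborhood graphs. -/
theorem stmt_5 (n m : ℕ) (X : Finset (Fin n → ℝ)) (r : ℝ) (hr : 0 < r)
    (ε : ℝ) (hε0 : 0 < ε) (hε1 : ε < 1)
    (hgap : ∀ x ∈ X,
      ε < min
        ((r ^ 2 - maxNbrVal distE X r (fun a b => distE a b ^ 2) x) /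
          maxNbrVal distE X r (fun a b => distE a b ^ 2) x)
        ((minNonNbrVal distE X r (fun a b => distE a b ^ 2) x - r ^ 2) /
          minNonNbrVal distE X r (fun a b => distE a b ^ 2) x))
    (A : Fin m → Fin n → ℝ)
    (hA : ∀ x ∈ X, ∀ y ∈ X,
      (1 - ε) * distE x y ^ 2 ≤ distE (matVec A x) (matVec A y) ^ 2 ∧
        distE (matVec A x) (matVec A y) ^ 2 ≤ (1 + ε) * distE x y ^ 2) :
    IsRIso distE distE X r (matVec A) :=
  isRIso_of_sq_dist_bounds (fun _ _ => distE_pos) distE_self distE_nonneg hr hε0.le hε1 hgap hA
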